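/- Under Assumptions (A2)–(A4), for every Δ > 0 with c3·Δ < 1, every t ∈ [0,T] and every z ∈ ℝ, the equation y − b(t,y)·Δ = z has a unique solution y with y > φ(t). In particular, under (A2) and (A4) there exists a constant C > 0 such that b(t,y) ≤ C + c3·y for all t ∈ [0,T] and all y ≥ φ(t) + 1. -/

import Mathlib

open Set Filter Topology

/-!
Since `∂b/∂y < c3`, the map `y ↦ c3 y - b(t, y)` increases on `(φ(t), ∞)`, so for `y ≥ φ(t) + 1`
we get `b(t, y) ≤ c3 y + (b(t, φ(t) + 1) - c3 (φ(t) + 1))`; the bracket is bounded on the compact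
interval `[0, T]` because `φ` (being Hölder) and `b` are continuous. For `c3 Δ < 1` the map
`y ↦ y - b(t, y) Δ` has positive derivative, tends to `+∞` at `∞` by this linear growth bound and
to `-∞` as `y ↓ φ(t)` by the singularity (A3), where `γ > 1/λ - 1 > 0`. The intermediate value
theorem gives a solution, strict monotonicity its uniqueness.
-/

theorem continuousOn_of_abs_sub_le_mul_rpow {f : ℝ → ℝ} {s : Set ℝ} {K r : ℝ} (hr : 0 < r)
    (hf : ∀ x ∈ s, ∀ y ∈ s, |f y - f x| ≤ K * |y - x| ^ r) : ContinuousOn f s := by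
  intro x hx
  have hbound : Tendsto (fun y => K * |y - x| ^ r) (𝓝[s] x) (𝓝 0) := by
    have : Continuous fun y => K * |y - x| ^ r := by fun_prop (disch := exact hr.le)
    simpa [Real.zero_rpow hr.ne'] using (this.tendsto x).mono_left nhdsWithin_le_nhds
  refine tendsto_iff_dist_tendsto_zero.mpr
    (squeeze_zero' (.of_forall fun _ => dist_nonneg) ?_ hbound)
  filter_upwards [self_mem_nhdsWithin] with y hy
  exact hf x hx y hy

theorem existsUnique_eq_of_strictMonoOn_Ioi {α β : Type*} [ConditionallyCompleteLinearOrder α]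
    [TopologicalSpace α] [OrderTopology α] [DenselyOrdered α] [NoMaxOrder α]
    [LinearOrder β] [TopologicalSpace β] [OrderClosedTopology β] {g : α → β} {a : α}
    (hcont : ContinuousOn g (Ioi a)) (hmono : StrictMonoOn g (Ioi a))
    (hbot : Tendsto g (𝓝[>] a) atBot) (htop : Tendsto g atTop atTop) (z : β) :
    ∃! y, a < y ∧ g y = z := by
  obtain ⟨x, hxz, hax⟩ := ((hbot.eventually (eventually_le_atBot z)).and self_mem_nhdsWithin).exists
  obtain ⟨y, hzy, hxy⟩ :=
    ((htop.eventually (eventually_ge_atTop z)).and (eventually_ge_atTop x)).exists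
  obtain ⟨w, hw, hwz⟩ := intermediate_value_Icc hxy
    (hcont.mono fun v hv => lt_of_lt_of_le hax hv.1) ⟨hxz, hzy⟩
  have haw : a < w := lt_of_lt_of_le hax hw.1
  exact ⟨w, ⟨haw, hwz⟩, fun v hv => hmono.injOn hv.1 haw (hv.2.trans hwz.symm)⟩

theorem strictMonoOn_Ioi_of_hasDerivAt_pos {g g' : ℝ → ℝ} {a : ℝ}
    (hg : ∀ y, a < y → HasDerivAt g (g' y) y) (hpos : ∀ y, a < y → 0 < g' y) :
    StrictMonoOn g (Ioi a) := by
  refine strictMonoOn_of_hasDerivWithinAt_pos (convex_Ioi a) (f' := g')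
    (fun y hy => (hg y hy).continuousAt.continuousWithinAt) (fun y hy => ?_) fun y hy => ?_
  · rw [interior_Ioi] at hy ⊢
    exact (hg y hy).hasDerivWithinAt
  · rw [interior_Ioi] at hy
    exact hpos y hy

theorem strictMonoOn_sub_mul_of_deriv_lt {f f' : ℝ → ℝ} {a c Δ : ℝ}
    (hf : ∀ y, a < y → HasDerivAt f (f' y) y) (hf' : ∀ y, a < y → f' y < c)
    (hΔ : 0 < Δ) (hcΔ : c * Δ ≤ 1) : StrictMonoOn (fun x => x - f x * Δ) (Ioi a) :=
  strictMonoOn_Ioi_of_hasDerivAt_pos (fun y hy => (hasDerivAt_id y).sub ((hf y hy).mul_const Δ))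
    fun y hy => by nlinarith [hf' y hy]

theorem le_add_mul_sub_of_deriv_lt {f f' : ℝ → ℝ} {a c x y : ℝ}
    (hf : ∀ y, a < y → HasDerivAt f (f' y) y) (hf' : ∀ y, a < y → f' y < c)
    (hax : a < x) (hxy : x ≤ y) : f y ≤ f x + c * (y - x) := by
  have hmono : StrictMonoOn (fun x => c * x - f x) (Ioi a) :=
    strictMonoOn_Ioi_of_hasDerivAt_pos
      (fun y hy => by simpa only [mul_one] using ((hasDerivAt_id' y).const_mul c).fun_sub (hf y hy))
      fun y hy => sub_pos.mpr (hf' y hy)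
  have := hmono.monotoneOn hax (lt_of_lt_of_le hax hxy) hxy
  linarith

theorem tendsto_sub_mul_nhdsGT_atBot {f : ℝ → ℝ} {a c γ δ Δ : ℝ} (hc : 0 < c) (hγ : 0 < γ)
    (hδ : 0 < δ) (hΔ : 0 < Δ) (hf : ∀ y, a < y → y ≤ a + δ → c / (y - a) ^ γ ≤ f y) :
    Tendsto (fun y => y - f y * Δ) (𝓝[>] a) atBot := by
  have hshift : Tendsto (fun y => y - a) (𝓝[>] a) (𝓝[>] 0) :=
    tendsto_nhdsWithin_of_tendsto_nhds_of_eventually_within _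
      (by simpa using ((continuous_sub_right a).tendsto a).mono_left nhdsWithin_le_nhds)
      (eventually_nhdsWithin_of_forall fun _ hy => mem_Ioi.mpr (sub_pos.mpr hy))
  have hlower : Tendsto (fun y => c * (y - a) ^ (-γ)) (𝓝[>] a) atTop :=
    ((tendsto_rpow_neg_nhdsGT_zero (neg_neg_of_pos hγ)).comp hshift).const_mul_atTop hc
  have hfTop : Tendsto f (𝓝[>] a) atTop := by
    refine tendsto_atTop_mono' _ ?_ hlower
    filter_upwards [Ioc_mem_nhdsGT (lt_add_of_pos_right a hδ)] with y hy
    rw [Real.rpow_neg (sub_pos.mpr hy.1).le, ← div_eq_mul_inv]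
    exact hf y hy.1 hy.2
  simpa [sub_eq_add_neg] using (tendsto_nhdsWithin_of_tendsto_nhds tendsto_id).add_atBot
    (tendsto_neg_atTop_atBot.comp (hfTop.atTop_mul_const hΔ))

theorem tendsto_sub_mul_atTop_atTop {f : ℝ → ℝ} {C c Δ : ℝ} (hΔ : 0 ≤ Δ) (hcΔ : c * Δ < 1)
    (hf : ∀ᶠ y in atTop, f y ≤ C + c * y) : Tendsto (fun y => y - f y * Δ) atTop atTop := by
  refine tendsto_atTop_mono' _ ?_
    (tendsto_atTop_add_const_right _ (-(C * Δ)) (tendsto_id.const_mul_atTop (sub_pos.mpr hcΔ)))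
  filter_upwards [hf] with y hy
  simp only [id]
  nlinarith [mul_le_mul_of_nonneg_right hy hΔ]

theorem stmt_5_general
    (T lam : ℝ) (hlam : lam ∈ Set.Ioo (0:ℝ) 1)
    (phi : ℝ → ℝ) (K : ℝ)
    (hphiH : ∀ s ∈ Set.Icc (0:ℝ) T, ∀ t ∈ Set.Icc (0:ℝ) T, |phi t - phi s| ≤ K * |t - s| ^ lam)
    (b : ℝ → ℝ → ℝ) (c2 ystar gam : ℝ)
    (hc2 : 0 < c2) (hystar : 0 < ystar)
    (hgam : 1 / lam - 1 < gam)
    (hA2cont : ContinuousOn (fun q : ℝ × ℝ => b q.1 q.2)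
      {q : ℝ × ℝ | q.1 ∈ Set.Icc (0:ℝ) T ∧ phi q.1 < q.2})
    (hA3 : ∀ t ∈ Set.Icc (0:ℝ) T, ∀ y : ℝ, phi t < y → y ≤ phi t + ystar →
      c2 / (y - phi t) ^ gam ≤ b t y)
    (bp : ℝ → ℝ → ℝ) (c3 : ℝ)
    (hA4deriv : ∀ t ∈ Set.Icc (0:ℝ) T, ∀ y : ℝ, phi t < y →
      HasDerivAt (fun x => b t x) (bp t y) y)
    (hA4lt : ∀ t ∈ Set.Icc (0:ℝ) T, ∀ y : ℝ, phi t < y → bp t y < c3)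
    :
    (∀ Δ : ℝ, 0 < Δ → c3 * Δ < 1 → ∀ t ∈ Set.Icc (0:ℝ) T, ∀ z : ℝ,
      ∃! y : ℝ, phi t < y ∧ y - b t y * Δ = z) ∧
    ∃ C : ℝ, 0 < C ∧ ∀ t ∈ Set.Icc (0:ℝ) T, ∀ y : ℝ, phi t + 1 ≤ y → b t y ≤ C + c3 * y := by
  have hgam0 : 0 < gam := by linarith [(one_lt_div hlam.1).mpr hlam.2]
  have hphi : ContinuousOn phi (Icc 0 T) := continuousOn_of_abs_sub_le_mul_rpow hlam.1 hphiH
  obtain ⟨M, hM⟩ : BddAbove ((fun t => b t (phi t + 1) - c3 * (phi t + 1)) '' Icc 0 T) :=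
    isCompact_Icc.bddAbove_image <| .sub
      (hA2cont.comp (continuousOn_id.prodMk (hphi.add continuousOn_const)) fun t ht =>
        ⟨ht, lt_add_one _⟩)
      (continuousOn_const.mul (hphi.add continuousOn_const))
  have hgrowth : ∀ t ∈ Icc 0 T, ∀ y, phi t + 1 ≤ y → b t y ≤ max M 1 + c3 * y := by
    intro t ht y hy
    have hslope := le_add_mul_sub_of_deriv_lt (hA4deriv t ht) (hA4lt t ht) (lt_add_one _) hy
    linarith [hM (mem_image_of_mem _ ht), le_max_left M 1]
  refine ⟨fun Δ hΔ hcΔ t ht z => ?_, max M 1, lt_max_of_lt_right one_pos, hgrowth⟩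
  have hcont : ContinuousOn (b t) (Ioi (phi t)) := fun y hy =>
    (hA4deriv t ht y hy).continuousAt.continuousWithinAt
  exact existsUnique_eq_of_strictMonoOn_Ioi
    (continuousOn_id.sub (hcont.mul continuousOn_const))
    (strictMonoOn_sub_mul_of_deriv_lt (hA4deriv t ht) (hA4lt t ht) hΔ hcΔ.le)
    (tendsto_sub_mul_nhdsGT_atBot hc2 hgam0 hystar hΔ (hA3 t ht))
    (tendsto_sub_mul_atTop_atTop hΔ.le hcΔ ((eventually_ge_atTop _).mono (hgrowth t ht))) z

theorem stmt_5
    (T lam : ℝ) (hT : 0 < T) (hlam : lam ∈ Set.Ioo (0:ℝ) 1)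
    (phi : ℝ → ℝ) (K : ℝ) (hK : 0 < K)
    (hphiH : ∀ s ∈ Set.Icc (0:ℝ) T, ∀ t ∈ Set.Icc (0:ℝ) T, |phi t - phi s| ≤ K * |t - s| ^ lam)
    (b : ℝ → ℝ → ℝ) (c1 p c2 ystar gam : ℝ)
    (hc1 : 0 < c1) (hp : 1 < p) (hc2 : 0 < c2) (hystar : 0 < ystar)
    (hgam : 1 / lam - 1 < gam)
    (hA2cont : ContinuousOn (fun q : ℝ × ℝ => b q.1 q.2)
      {q : ℝ × ℝ | q.1 ∈ Set.Icc (0:ℝ) T ∧ phi q.1 < q.2})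
    (hA2lip : ∀ ε : ℝ, 0 < ε → ε < 1 →
      ∀ t1 ∈ Set.Icc (0:ℝ) T, ∀ t2 ∈ Set.Icc (0:ℝ) T, ∀ y1 y2 : ℝ,
        phi t1 + ε < y1 → phi t2 + ε < y2 →
        |b t1 y1 - b t2 y2| ≤ c1 / ε ^ p * (|y1 - y2| + |t1 - t2| ^ lam))
    (hA3 : ∀ t ∈ Set.Icc (0:ℝ) T, ∀ y : ℝ, phi t < y → y ≤ phi t + ystar →
      c2 / (y - phi t) ^ gam ≤ b t y)
    (bp : ℝ → ℝ → ℝ) (c3 : ℝ) (hc3 : 0 < c3)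
    (hA4deriv : ∀ t ∈ Set.Icc (0:ℝ) T, ∀ y : ℝ, phi t < y →
      HasDerivAt (fun x => b t x) (bp t y) y)
    (hA4cont : ContinuousOn (fun q : ℝ × ℝ => bp q.1 q.2)
      {q : ℝ × ℝ | q.1 ∈ Set.Icc (0:ℝ) T ∧ phi q.1 < q.2})
    (hA4lt : ∀ t ∈ Set.Icc (0:ℝ) T, ∀ y : ℝ, phi t < y → bp t y < c3)
    :
    (∀ Δ : ℝ, 0 < Δ → c3 * Δ < 1 → ∀ t ∈ Set.Icc (0:ℝ) T, ∀ z : ℝ,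
      ∃! y : ℝ, phi t < y ∧ y - b t y * Δ = z) ∧
    ∃ C : ℝ, 0 < C ∧ ∀ t ∈ Set.Icc (0:ℝ) T, ∀ y : ℝ, phi t + 1 ≤ y → b t y ≤ C + c3 * y :=
  stmt_5_general T lam hlam phi K hphiH b c2 ystar gam hc2 hystar hgam hA2cont hA3 bp c3 hA4deriv
    hA4lt
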